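/- Every invertible k-nonnegative n×n real matrix X (1 ≤ k ≤ n) can be factored as X = P·M·Q, where P and Q are finite (possibly empty) products of Chevalley generators e_i(c) and f_i(c) with positive parameters c > 0, and M is an invertible k-nonnegative k-irreducible matrix. -/

import Mathlib

/-!
If `X` is not `k`-irreducible then, after transposing if necessary, `X = e * S` with `S`
`k`-nonnegative and `e = transvection r s a`, `a > 0`, for adjacent rows `r`, `s`. Every minor of
order at most `k` of `transvection r s (-c) * X` is affine in `c` with nonnegative slope: the slope
is the minor of `X` with row `r` replaced by its neighbour `s` (or `0` if row `r` is not used),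
and adjacency keeps the rows in increasing order. Pushing `c` to the largest value for which all
these minors stay nonnegative gives `X = transvection r s b * W` with `W` `k`-nonnegative and
strictly fewer nonzero minors than `X`: one nonzero minor vanishes and no vanishing minor
revives. Induct on the number of nonzero minors.
-/

open Matrix

/-- A square real matrix is `k`-nonnegative if every minor of order at most `k`
(indexed by strictly increasing row and column selections) is nonnegative. -/
def IsKNonneg {n : ℕ} (k : ℕ) (X : Matrix (Fin n) (Fin n) ℝ) : Prop :=
  ∀ m : ℕ, m ≤ k → ∀ I J : Fin m → Fin n, StrictMono I → StrictMono J →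
    0 ≤ (X.submatrix I J).det

/-- The Chevalley generator `e_i(a)` (0-based index `i`): the identity matrix with
entry `a` in position `(i, i+1)`.  `f_i(a)` is its transpose. -/
def chevE (n : ℕ) (i : ℕ) (a : ℝ) : Matrix (Fin n) (Fin n) ℝ :=
  fun p q => if (p : ℕ) = (q : ℕ) then 1
    else if (p : ℕ) = i ∧ (q : ℕ) = i + 1 then a
    else 0

/-- A matrix is a Chevalley generator with positive parameter: some `e_i(a)` or
`f_i(a) = e_i(a)ᵀ` with `a > 0`. -/
def IsChevalley {n : ℕ} (M : Matrix (Fin n) (Fin n) ℝ) : Prop :=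
  ∃ i a, i + 1 < n ∧ 0 < a ∧ (M = chevE n i a ∨ M = (chevE n i a)ᵀ)

/-- A matrix is a finite (possibly empty) product of Chevalley generators with
positive parameters. -/
def IsChevProd {n : ℕ} (P : Matrix (Fin n) (Fin n) ℝ) : Prop :=
  ∃ L : List (Matrix (Fin n) (Fin n) ℝ), (∀ M ∈ L, IsChevalley M) ∧ P = L.prod

/-- A `k`-nonnegative invertible matrix `M` is `k`-irreducible if in any factorization
`M = R * S` with `R`, `S` invertible and `k`-nonnegative, neither factor is a Chevalley
generator with positive parameter. -/
def KIrreducible {n : ℕ} (k : ℕ) (M : Matrix (Fin n) (Fin n) ℝ) : Prop :=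
  ∀ R S : Matrix (Fin n) (Fin n) ℝ, IsUnit R → IsUnit S →
    IsKNonneg k R → IsKNonneg k S → M = R * S →
    ¬ IsChevalley R ∧ ¬ IsChevalley S

section RowOperations

variable {l l' m o α : Type*} [DecidableEq m]

theorem Matrix.submatrix_updateRow_of_notMem_range (X : Matrix m o α) {r : m} (v : o → α)
    {I : l → m} (J : l' → o) (hr : r ∉ Set.range I) :
    (X.updateRow r v).submatrix I J = X.submatrix I J := by
  ext p q
  rw [submatrix_apply, submatrix_apply, updateRow_ne fun h => hr ⟨p, h⟩]

theorem Matrix.submatrix_updateRow_of_apply_eq [DecidableEq l] (X : Matrix m o α) {r : m}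
    (v : o → α) {I : l → m} (J : l' → o) (hI : Function.Injective I) {p : l} (hp : I p = r) :
    (X.updateRow r v).submatrix I J = (X.submatrix I J).updateRow p (v ∘ J) := by
  ext q j
  rcases eq_or_ne q p with rfl | hq
  · simp [hp]
  · simp [hq, updateRow_ne (hp ▸ hI.ne hq)]

theorem Matrix.transvection_mul_eq_updateRow [Fintype m] [CommRing α] (X : Matrix m o α)
    (r s : m) (c : α) : transvection r s c * X = X.updateRow r (X r + c • X s) := by
  ext i j
  rcases eq_or_ne i r with rfl | hi
  · simp
  · simp [hi]

theorem Matrix.transpose_transvection [CommRing α] (r s : m) (c : α) :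
    (transvection r s c)ᵀ = transvection s r c := by
  simp [transvection, transpose_single]

end RowOperations

theorem monotone_update_id_of_covBy {α : Type*} [LinearOrder α] {r s : α}
    (hrs : r ⋖ s ∨ s ⋖ r) : Monotone (Function.update id r s) := by
  intro x y hxy
  by_cases hx : x = r <;> by_cases hy : y = r
  · simp [hx, hy]
  · subst hx
    rw [Function.update_self, Function.update_of_ne hy]
    rcases hrs with hrs | hrs
    · exact hrs.ge_of_gt (lt_of_le_of_ne hxy (Ne.symm hy))
    · exact (hrs.lt.trans (lt_of_le_of_ne hxy (Ne.symm hy))).le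
  · subst hy
    rw [Function.update_self, Function.update_of_ne hx]
    rcases hrs with hrs | hrs
    · exact ((lt_of_le_of_ne hxy hx).trans hrs.lt).le
    · exact hrs.le_of_lt (lt_of_le_of_ne hxy hx)
  · simpa [Function.update_of_ne hx, Function.update_of_ne hy] using hxy

theorem exists_ge_forall_sub_mul_nonneg_support_ssubset {T : Type*} [Finite T] {x d : T → ℝ}
    {a : ℝ} (ha : 0 < a) (hd : ∀ t, 0 ≤ d t) (hxa : ∀ t, 0 ≤ x t - a * d t)
    (hpos : ∃ t, 0 < d t) :
    ∃ b, a ≤ b ∧ (∀ t, 0 ≤ x t - b * d t) ∧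
      Function.support (fun t => x t - b * d t) ⊂ Function.support x := by
  obtain ⟨t₀, ht₀ : 0 < d t₀, hmin⟩ :=
    Set.exists_min_image {t | 0 < d t} (fun t => x t / d t) (Set.toFinite _) hpos
  have hmin' : ∀ t, 0 < d t → x t₀ / d t₀ * d t ≤ x t := fun t ht =>
    (le_div_iff₀ ht).1 (hmin t ht)
  have hab : a ≤ x t₀ / d t₀ := (le_div_iff₀ ht₀).2 (by linarith [hxa t₀])
  refine ⟨x t₀ / d t₀, hab, fun t => ?_, ?_⟩
  · rcases (hd t).lt_or_eq with ht | ht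
    · linarith [hmin' t ht]
    · simpa [← ht] using hxa t
  · rw [Set.ssubset_iff_of_subset]
    · refine ⟨t₀, ?_, ?_⟩
      · rw [Function.mem_support, ← div_mul_cancel₀ (x t₀) ht₀.ne']
        exact (mul_pos (ha.trans_le hab) ht₀).ne'
      · simp [div_mul_cancel₀ _ ht₀.ne']
    · intro t ht
      contrapose! ht
      rw [Function.notMem_support] at ht ⊢
      have : d t = 0 := by nlinarith [hxa t, hd t]
      rw [ht, this, mul_zero, sub_zero]

section Minors

variable {n k : ℕ}

def MinorIndex (n k : ℕ) : Type :=
  Σ m : Fin (k + 1),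
    {IJ : (Fin m → Fin n) × (Fin m → Fin n) // StrictMono IJ.1 ∧ StrictMono IJ.2}

namespace MinorIndex

instance : Finite (MinorIndex n k) := by unfold MinorIndex; infer_instance

def minor (t : MinorIndex n k) (X : Matrix (Fin n) (Fin n) ℝ) : ℝ :=
  (X.submatrix t.2.1.1 t.2.1.2).det

def entry (hk : 1 ≤ k) (i j : Fin n) : MinorIndex n k :=
  ⟨⟨1, by omega⟩, ⟨(![i], ![j]), Subsingleton.strictMono _, Subsingleton.strictMono _⟩⟩

theorem minor_entry (hk : 1 ≤ k) (i j : Fin n) (X : Matrix (Fin n) (Fin n) ℝ) :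
    (entry hk i j).minor X = X i j := by
  change (X.submatrix ![i] ![j] : Matrix (Fin 1) (Fin 1) ℝ).det = X i j
  rw [det_fin_one]
  rfl

def transpose (t : MinorIndex n k) : MinorIndex n k :=
  ⟨t.1, ⟨(t.2.1.2, t.2.1.1), t.2.2.2, t.2.2.1⟩⟩

theorem transpose_involutive : Function.Involutive (transpose : MinorIndex n k → _) :=
  fun _ => rfl

theorem minor_transpose (t : MinorIndex n k) (X : Matrix (Fin n) (Fin n) ℝ) :
    t.minor Xᵀ = t.transpose.minor X := by
  rw [minor, minor, ← transpose_submatrix, det_transpose]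
  rfl

end MinorIndex

theorem isKNonneg_iff {X : Matrix (Fin n) (Fin n) ℝ} :
    IsKNonneg k X ↔ ∀ t : MinorIndex n k, 0 ≤ t.minor X :=
  ⟨fun h t => h t.1 (Nat.lt_succ_iff.1 t.1.2) _ _ t.2.2.1 t.2.2.2,
    fun h m hm I J hI hJ => h ⟨⟨m, by omega⟩, ⟨(I, J), hI, hJ⟩⟩⟩

namespace IsKNonneg

variable {X : Matrix (Fin n) (Fin n) ℝ}

theorem transpose (hX : IsKNonneg k X) : IsKNonneg k Xᵀ :=
  isKNonneg_iff.2 fun t => by rw [t.minor_transpose]; exact isKNonneg_iff.1 hX _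

theorem exists_pos_of_isUnit (hX : IsKNonneg k X) (hk : 1 ≤ k) (hXu : IsUnit X) (i : Fin n) :
    ∃ j, 0 < X i j := by
  by_contra! h
  have hrow : ∀ j, X i j = 0 := fun j =>
    le_antisymm (h j) (by simpa [MinorIndex.minor_entry] using isKNonneg_iff.1 hX (.entry hk i j))
  exact isUnit_iff_ne_zero.1 ((isUnit_iff_isUnit_det X).1 hXu) (det_eq_zero_of_row_eq_zero i hrow)

/-- A minor with weakly increasing row selection is either a minor with strictly increasing
selections or has a repeated row. -/
theorem submatrix_of_monotone (hX : IsKNonneg k X) {f : Fin n → Fin n} (hf : Monotone f) :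
    IsKNonneg k (X.submatrix f id) := by
  intro m hm I J hI hJ
  rw [submatrix_submatrix]
  by_cases hinj : Function.Injective (f ∘ I)
  · exact hX m hm _ _ ((hf.comp hI.monotone).strictMono_of_injective hinj) hJ
  · obtain ⟨p, q, hpq, hne⟩ := Function.not_injective_iff.1 hinj
    exact (det_zero_of_row_eq hne (by ext j; exact congrArg (X · (J j)) hpq)).ge

theorem updateRow_of_covBy (hX : IsKNonneg k X) {r s : Fin n} (hrs : r ⋖ s ∨ s ⋖ r) :
    IsKNonneg k (X.updateRow r (X s)) := by
  have h : X.updateRow r (X s) = X.submatrix (Function.update id r s) id := by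
    ext i j
    rcases eq_or_ne i r with rfl | hi
    · simp
    · simp [hi]
  exact h ▸ hX.submatrix_of_monotone (monotone_update_id_of_covBy hrs)

end IsKNonneg

theorem MinorIndex.exists_minor_transvection_mul_eq (t : MinorIndex n k)
    {X : Matrix (Fin n) (Fin n) ℝ} (hX : IsKNonneg k X) {r s : Fin n} (hrs : r ⋖ s ∨ s ⋖ r) :
    ∃ d, 0 ≤ d ∧ ∀ c, t.minor (transvection r s c * X) = t.minor X + c * d := by
  obtain ⟨m, ⟨I, J⟩, hI, hJ⟩ := t
  simp only [minor, transvection_mul_eq_updateRow]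
  by_cases hr : r ∈ Set.range I
  · obtain ⟨p, rfl⟩ := hr
    refine ⟨((X.updateRow (I p) (X s)).submatrix I J).det,
      isKNonneg_iff.1 (hX.updateRow_of_covBy hrs) ⟨m, ⟨(I, J), hI, hJ⟩⟩, fun c => ?_⟩
    rw [submatrix_updateRow_of_apply_eq _ _ _ hI.injective rfl,
      submatrix_updateRow_of_apply_eq _ _ _ hI.injective rfl,
      show (X (I p) + c • X s) ∘ J = X.submatrix I J p + c • (X s ∘ J) from rfl,
      det_updateRow_add, det_updateRow_smul, updateRow_eq_self]
  · refine ⟨0, le_rfl, fun c => ?_⟩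
    rw [submatrix_updateRow_of_notMem_range _ _ _ hr, mul_zero, add_zero]

noncomputable def nonzeroMinorCount (k : ℕ) (X : Matrix (Fin n) (Fin n) ℝ) : ℕ :=
  (Function.support fun t : MinorIndex n k => t.minor X).ncard

theorem nonzeroMinorCount_transpose (X : Matrix (Fin n) (Fin n) ℝ) :
    nonzeroMinorCount k Xᵀ = nonzeroMinorCount k X := by
  have h : (Function.support fun t : MinorIndex n k => t.minor Xᵀ)
      = MinorIndex.transpose '' Function.support fun t => t.minor X := by
    rw [MinorIndex.transpose_involutive.image_eq_preimage_symm]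
    ext t
    simp [MinorIndex.minor_transpose]
  rw [nonzeroMinorCount, h,
    Set.ncard_image_of_injective _ MinorIndex.transpose_involutive.injective, nonzeroMinorCount]

theorem exists_transvection_mul_nonzeroMinorCount_lt (hk : 1 ≤ k) {r s : Fin n}
    (hrs : r ⋖ s ∨ s ⋖ r) {X S : Matrix (Fin n) (Fin n) ℝ} (hX : IsUnit X)
    (hXk : IsKNonneg k X) {a : ℝ} (ha : 0 < a) (hSk : IsKNonneg k S)
    (hXS : X = transvection r s a * S) :
    ∃ b, 0 < b ∧ ∃ W, IsUnit W ∧ IsKNonneg k W ∧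
      nonzeroMinorCount k W < nonzeroMinorCount k X ∧ X = transvection r s b * W := by
  have hne : r ≠ s := hrs.elim CovBy.ne CovBy.ne'
  have hcancel : ∀ c, transvection r s c * (transvection r s (-c) * X) = X := fun c => by
    rw [← mul_assoc, transvection_mul_transvection_same _ _ hne, add_neg_cancel,
      transvection_zero, one_mul]
  have hS : S = transvection r s (-a) * X := by
    rw [hXS, ← mul_assoc, transvection_mul_transvection_same _ _ hne, neg_add_cancel,
      transvection_zero, one_mul]
  choose d hd0 hd using fun t : MinorIndex n k => t.exists_minor_transvection_mul_eq hXk hrs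
  obtain ⟨j, hj⟩ := hXk.exists_pos_of_isUnit hk hX s
  have hpos : ∃ t, 0 < d t := by
    refine ⟨.entry hk r j, ?_⟩
    have h := hd (.entry hk r j) 1
    simp only [MinorIndex.minor_entry, transvection_mul_apply_same] at h
    linarith
  have hxa : ∀ t, 0 ≤ t.minor X - a * d t := fun t => by
    have h := isKNonneg_iff.1 hSk t
    rwa [hS, hd, neg_mul, ← sub_eq_add_neg] at h
  obtain ⟨b, hab, hb, hsupp⟩ :=
    exists_ge_forall_sub_mul_nonneg_support_ssubset ha hd0 hxa hpos
  have hminor : ∀ t : MinorIndex n k,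
      t.minor (transvection r s (-b) * X) = t.minor X - b * d t := fun t => by
    rw [hd, neg_mul, ← sub_eq_add_neg]
  refine ⟨b, ha.trans_le hab, transvection r s (-b) * X, ?_, ?_, ?_, (hcancel b).symm⟩
  · exact ((isUnit_iff_isUnit_det _).2 (by simp [det_transvection_of_ne _ _ hne])).mul hX
  · exact isKNonneg_iff.2 fun t => (hminor t).symm ▸ hb t
  · simp only [nonzeroMinorCount, hminor]
    exact Set.ncard_lt_ncard hsupp

theorem chevE_eq_transvection {i : ℕ} (hi : i + 1 < n) (a : ℝ) :
    chevE n i a = transvection ⟨i, by omega⟩ ⟨i + 1, hi⟩ a := by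
  ext p q
  simp only [chevE, transvection, Matrix.add_apply, one_apply, single_apply, Fin.ext_iff]
  split_ifs <;> first | omega | simp

theorem isChevalley_iff {M : Matrix (Fin n) (Fin n) ℝ} :
    IsChevalley M ↔ ∃ r s : Fin n, (r ⋖ s ∨ s ⋖ r) ∧ ∃ a, 0 < a ∧ M = transvection r s a := by
  constructor
  · rintro ⟨i, a, hi, ha, rfl | rfl⟩
    · exact ⟨⟨i, by omega⟩, ⟨i + 1, hi⟩, .inl (by simp), a, ha, chevE_eq_transvection hi a⟩
    · exact ⟨⟨i + 1, hi⟩, ⟨i, by omega⟩, .inr (by simp), a, ha,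
        by rw [chevE_eq_transvection hi, transpose_transvection]⟩
  · rintro ⟨⟨r, hr⟩, ⟨s, hs⟩, hrs | hrs, a, ha, rfl⟩ <;>
      simp only [Fin.covBy_iff, Nat.covBy_iff_add_one_eq] at hrs <;> subst hrs
    · exact ⟨r, a, hs, ha, .inl (chevE_eq_transvection hs a).symm⟩
    · exact ⟨s, a, hr, ha, .inr (by rw [chevE_eq_transvection hr, transpose_transvection])⟩

theorem isChevProd_one : IsChevProd (1 : Matrix (Fin n) (Fin n) ℝ) :=
  ⟨[], by simp, by simp⟩

theorem IsChevalley.isChevProd {G : Matrix (Fin n) (Fin n) ℝ} (hG : IsChevalley G) :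
    IsChevProd G :=
  ⟨[G], by simpa using hG, by simp⟩

theorem IsChevProd.mul {P Q : Matrix (Fin n) (Fin n) ℝ} (hP : IsChevProd P)
    (hQ : IsChevProd Q) : IsChevProd (P * Q) := by
  obtain ⟨L, hL, rfl⟩ := hP
  obtain ⟨L', hL', rfl⟩ := hQ
  exact ⟨L ++ L', fun M hM => (List.mem_append.1 hM).elim (hL M) (hL' M), by simp⟩

theorem exists_chevalley_factor_of_not_kIrreducible (hk : 1 ≤ k)
    {X : Matrix (Fin n) (Fin n) ℝ} (hX : IsUnit X) (hXk : IsKNonneg k X)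
    (hirr : ¬ KIrreducible k X) :
    ∃ G W, IsChevalley G ∧ IsUnit W ∧ IsKNonneg k W ∧
      nonzeroMinorCount k W < nonzeroMinorCount k X ∧ (X = G * W ∨ X = W * G) := by
  simp only [KIrreducible, not_forall, not_and_or, not_not] at hirr
  obtain ⟨R, S, -, -, hRk, hSk, rfl, hR | hS⟩ := hirr
  · obtain ⟨r, s, hrs, a, ha, rfl⟩ := isChevalley_iff.1 hR
    obtain ⟨b, hb, W, hW, hWk, hlt, hXW⟩ :=
      exists_transvection_mul_nonzeroMinorCount_lt hk hrs hX hXk ha hSk rfl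
    exact ⟨_, W, isChevalley_iff.2 ⟨r, s, hrs, b, hb, rfl⟩, hW, hWk, hlt, .inl hXW⟩
  · obtain ⟨r, s, hrs, a, ha, rfl⟩ := isChevalley_iff.1 hS
    obtain ⟨b, hb, W, hW, hWk, hlt, hXW⟩ :=
      exists_transvection_mul_nonzeroMinorCount_lt hk hrs.symm ((isUnit_transpose _).2 hX)
        hXk.transpose ha hRk.transpose (by rw [transpose_mul, transpose_transvection])
    refine ⟨_, Wᵀ, isChevalley_iff.2 ⟨r, s, hrs, b, hb, rfl⟩, (isUnit_transpose _).2 hW,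
      hWk.transpose, ?_, .inr ?_⟩
    · rwa [nonzeroMinorCount_transpose, ← nonzeroMinorCount_transpose (R * _)]
    · rw [← transpose_transpose (R * _), hXW, transpose_mul, transpose_transvection]

end Minors

theorem factorization_into_irreducible_general {n k : ℕ} (hk1 : 1 ≤ k)
    (X : Matrix (Fin n) (Fin n) ℝ) (hX : IsUnit X) (hXk : IsKNonneg k X) :
    ∃ P M Q : Matrix (Fin n) (Fin n) ℝ, IsChevProd P ∧ IsChevProd Q ∧
      IsUnit M ∧ IsKNonneg k M ∧ KIrreducible k M ∧ X = P * M * Q := by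
  induction hN : nonzeroMinorCount k X using Nat.strong_induction_on generalizing X with
  | _ N ih =>
  by_cases hirr : KIrreducible k X
  · exact ⟨1, X, 1, isChevProd_one, isChevProd_one, hX, hXk, hirr, by simp⟩
  obtain ⟨G, W, hG, hW, hWk, hlt, hXW⟩ :=
    exists_chevalley_factor_of_not_kIrreducible hk1 hX hXk hirr
  obtain ⟨P, M, Q, hP, hQ, hM, hMk, hMirr, rfl⟩ := ih _ (hN ▸ hlt) W hW hWk rfl
  rcases hXW with rfl | rfl
  · exact ⟨G * P, M, Q, hG.isChevProd.mul hP, hQ, hM, hMk, hMirr, by simp only [mul_assoc]⟩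
  · exact ⟨P, M, Q * G, hP, hQ.mul hG.isChevProd, hM, hMk, hMirr, by simp only [mul_assoc]⟩

/-- Every invertible `k`-nonnegative matrix factors as (Chevalley generators) ·
(`k`-irreducible matrix) · (Chevalley generators). -/
theorem factorization_into_irreducible {n k : ℕ} (hk1 : 1 ≤ k) (hkn : k ≤ n)
    (X : Matrix (Fin n) (Fin n) ℝ) (hX : IsUnit X) (hXk : IsKNonneg k X) :
    ∃ P M Q : Matrix (Fin n) (Fin n) ℝ, IsChevProd P ∧ IsChevProd Q ∧
      IsUnit M ∧ IsKNonneg k M ∧ KIrreducible k M ∧ X = P * M * Q :=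
  factorization_into_irreducible_general hk1 X hX hXk
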